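/- arXiv:cond-mat/0602276 — 3 statements merged into one kernel-verified Lean document; each statement's English description precedes it below -/
import Mathlib

section
/- Let A_n be the 2x2 matrix with entries a11 = n, a12 = a21 = \sum_{j=1}^n ln(j), a22 = \sum_{j=1}^n ln^2(j), and let \lambda_{max}(n) and \lambda_{min}(n) be its largest and smallest eigenvalues. Then \lambda_{max}(n)/\lambda_{min}(n) divided by ln^4(n) tends to 1 as n \to \infty. -/
open Finset Real Filter

noncomputable def L (n : ℕ) : ℝ := ∑ j ∈ Finset.Icc 1 n, Real.log j
noncomputable def Q (n : ℕ) : ℝ := ∑ j ∈ Finset.Icc 1 n, (Real.log j)^2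

noncomputable def A (n : ℕ) : Matrix (Fin 2) (Fin 2) ℝ := !![(n:ℝ), L n; L n, Q n]

lemma hA (n : ℕ) : (A n).IsHermitian := by
  show (A n).conjTranspose = A n
  ext i j
  fin_cases i <;> fin_cases j <;> simp [A]

noncomputable def lmax (n : ℕ) : ℝ := max ((hA n).eigenvalues 0) ((hA n).eigenvalues 1)
noncomputable def lmin (n : ℕ) : ℝ := min ((hA n).eigenvalues 0) ((hA n).eigenvalues 1)

/-! ### Trace and determinant via eigenvalues -/

lemma trace_lemma (n : ℕ) : lmax n + lmin n = (n:ℝ) + Q n := by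
  have h2 := (hA n).trace_eq_sum_eigenvalues
  simp only [Function.comp_apply, Fin.sum_univ_two, RCLike.ofReal_real_eq_id, id_eq] at h2
  have htr : Matrix.trace (A n) = (n:ℝ) + Q n := by
    simp [A, Matrix.trace_fin_two]
  rw [htr] at h2
  unfold lmax lmin
  rcases le_total ((hA n).eigenvalues 0) ((hA n).eigenvalues 1) with hle | hle <;>
    simp [max_eq_right, max_eq_left, min_eq_left, min_eq_right, hle] <;> linarith [h2]

lemma det_lemma (n : ℕ) : lmax n * lmin n = (n:ℝ) * Q n - L n * L n := by
  have h := (hA n).det_eq_prod_eigenvalues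
  rw [show (A n).det = (n:ℝ) * Q n - L n * L n by simp [A, Matrix.det_fin_two_of]] at h
  simp only [Fin.prod_univ_two, RCLike.ofReal_real_eq_id, id] at h
  unfold lmax lmin
  rw [max_mul_min]
  linarith [h]

/-! ### Sum–integral comparison bounds for `L` and `Q` -/

lemma mono_log (n : ℕ) : MonotoneOn (fun x : ℝ => Real.log x) (Set.Icc ((1:ℕ):ℝ) n) := by
  intro a ha b hb hab
  have h1 : (1:ℝ) ≤ a := by simpa using ha.1
  exact Real.log_le_log (by linarith) hab

lemma mono_logsq (n : ℕ) : MonotoneOn (fun x : ℝ => (Real.log x)^2) (Set.Icc ((1:ℕ):ℝ) n) := by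
  intro a ha b hb hab
  have h1 : (1:ℝ) ≤ a := by simpa using ha.1
  have h2 : (0:ℝ) ≤ Real.log a := Real.log_nonneg h1
  have h3 : Real.log a ≤ Real.log b := Real.log_le_log (by linarith) hab
  exact pow_le_pow_left₀ h2 h3 2

lemma sum_shift_log (n : ℕ) :
    ∑ i ∈ Finset.Ico 1 n, Real.log ((i + 1 : ℕ) : ℝ)
      = ∑ j ∈ Finset.Icc 2 n, Real.log (j : ℝ) := by
  rw [← Finset.Ico_add_one_right_eq_Icc, Finset.sum_Ico_eq_sum_range, Finset.sum_Ico_eq_sum_range]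
  apply Finset.sum_congr
  · congr 1 <;> omega
  · intro i _; congr 1 <;> push_cast <;> ring

lemma sum_shift_logsq (n : ℕ) :
    ∑ i ∈ Finset.Ico 1 n, (Real.log ((i + 1 : ℕ) : ℝ))^2
      = ∑ j ∈ Finset.Icc 2 n, (Real.log (j : ℝ))^2 := by
  rw [← Finset.Ico_add_one_right_eq_Icc, Finset.sum_Ico_eq_sum_range, Finset.sum_Ico_eq_sum_range]
  apply Finset.sum_congr
  · congr 1 <;> omega
  · intro i _; congr 2 <;> push_cast <;> ring

lemma L_split {n : ℕ} (hn : 1 ≤ n) : L n = ∑ j ∈ Finset.Icc 2 n, Real.log j := by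
  unfold L
  rw [Finset.Icc_eq_cons_Ioc hn, Finset.sum_cons]
  simp [← Finset.Icc_add_one_left_eq_Ioc]

lemma Q_split {n : ℕ} (hn : 1 ≤ n) : Q n = ∑ j ∈ Finset.Icc 2 n, (Real.log j)^2 := by
  unfold Q
  rw [Finset.Icc_eq_cons_Ioc hn, Finset.sum_cons]
  simp [← Finset.Icc_add_one_left_eq_Ioc]

lemma L_Ico {n : ℕ} (hn : 1 ≤ n) :
    ∑ j ∈ Finset.Ico 1 n, Real.log j = L n - Real.log n := by
  unfold L
  rw [← Finset.Ico_add_one_right_eq_Icc, Finset.sum_Ico_succ_top hn]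
  ring

lemma Q_Ico {n : ℕ} (hn : 1 ≤ n) :
    ∑ j ∈ Finset.Ico 1 n, (Real.log j)^2 = Q n - (Real.log n)^2 := by
  unfold Q
  rw [← Finset.Ico_add_one_right_eq_Icc, Finset.sum_Ico_succ_top hn]
  ring

lemma npos {n : ℕ} (hn : 1 ≤ n) : (0:ℝ) < (n:ℝ) := by
  exact_mod_cast Nat.pos_of_ne_zero (by omega)

lemma L_lb {n : ℕ} (hn : 1 ≤ n) : (n:ℝ) * Real.log n - n + 1 ≤ L n := by
  have h := (mono_log n).integral_le_sum_Ico hn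
  rw [sum_shift_log, L_split hn] at *
  rw [show ((1:ℕ):ℝ) = (1:ℝ) by norm_num, integral_log] at h
  simpa using h

lemma L_ub {n : ℕ} (hn : 1 ≤ n) : L n ≤ (n:ℝ) * Real.log n - n + 1 + Real.log n := by
  have h := (mono_log n).sum_le_integral_Ico hn
  rw [L_Ico hn] at h
  rw [show ((1:ℕ):ℝ) = (1:ℝ) by norm_num, integral_log] at h
  simp only [Real.log_one] at h
  linarith

lemma integral_logsq {n : ℕ} (hn : 1 ≤ n) :
    ∫ x in (1:ℝ)..n, (Real.log x)^2
      = (n:ℝ) * (Real.log n)^2 - 2*n*Real.log n + 2*n - 2 := by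
  have hn1 : (1:ℝ) ≤ (n:ℝ) := by exact_mod_cast hn
  have key : ∀ x ∈ Set.uIcc (1:ℝ) (n:ℝ),
      HasDerivAt (fun x : ℝ => x * (Real.log x)^2 - 2*x*Real.log x + 2*x)
        ((Real.log x)^2) x := by
    intro x hx
    rw [Set.uIcc_of_le hn1] at hx
    have hx0 : (0:ℝ) < x := lt_of_lt_of_le one_pos hx.1
    have hlog := Real.hasDerivAt_log (ne_of_gt hx0)
    have h1 : HasDerivAt (fun y : ℝ => y * (Real.log y)^2)
        (1 * (Real.log x)^2 + x * (2 * Real.log x ^ 1 * x⁻¹)) x := by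
      exact ((hasDerivAt_id' x).mul (hlog.pow 2)).congr_deriv (by norm_num)
    have h2 : HasDerivAt (fun y : ℝ => 2*y*Real.log y)
        (2 * (1 * Real.log x + x * x⁻¹)) x := by
      simpa [mul_assoc] using ((hasDerivAt_id x).mul hlog).const_mul (2:ℝ)
    have h3 : HasDerivAt (fun y : ℝ => 2*y) (2 : ℝ) x := by
      simpa using (hasDerivAt_id x).const_mul (2:ℝ)
    have h4 := (h1.sub h2).add h3
    refine h4.congr_deriv ?_
    linear_combination (2 * Real.log x - 2) * (mul_inv_cancel₀ hx0.ne')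
  rw [intervalIntegral.integral_eq_sub_of_hasDerivAt key]
  · simp [Real.log_one]
  · apply ContinuousOn.intervalIntegrable
    apply ContinuousOn.pow
    apply Real.continuousOn_log.mono
    rw [Set.uIcc_of_le hn1]
    intro x hx
    simp only [Set.mem_compl_iff, Set.mem_singleton_iff]
    intro h; rw [h] at hx; linarith [hx.1]

lemma Q_lb {n : ℕ} (hn : 1 ≤ n) :
    (n:ℝ) * (Real.log n)^2 - 2*n*Real.log n + 2*n - 2 ≤ Q n := by
  have h := (mono_logsq n).integral_le_sum_Ico hn
  rw [sum_shift_logsq, Q_split hn] at *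
  rw [show ((1:ℕ):ℝ) = (1:ℝ) by norm_num] at h
  rwa [integral_logsq hn] at h

lemma Q_ub {n : ℕ} (hn : 1 ≤ n) :
    Q n ≤ (n:ℝ) * (Real.log n)^2 - 2*n*Real.log n + 2*n - 2 + (Real.log n)^2 := by
  have h := (mono_logsq n).sum_le_integral_Ico hn
  rw [Q_Ico hn] at h
  rw [show ((1:ℕ):ℝ) = (1:ℝ) by norm_num] at h
  rw [integral_logsq hn] at h
  linarith

lemma L_nonneg (n : ℕ) : 0 ≤ L n := by
  unfold L
  apply Finset.sum_nonneg
  intro j hj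
  rw [Finset.mem_Icc] at hj
  exact Real.log_nonneg (by exact_mod_cast hj.1)

/-! ### Positivity of the determinant -/

lemma det_pos {n : ℕ} (hn : 3 ≤ n) : 0 < (n:ℝ) * Q n - L n * L n := by
  have hn1 : 1 ≤ n := by omega
  have hnp := npos hn1
  have key : ∀ j : ℕ, ((n:ℝ) * Real.log j - L n)^2
      = (n:ℝ)^2 * (Real.log j)^2 - (2*(n:ℝ)*L n) * Real.log j + L n * L n := by
    intro j; ring
  have hS : ∑ j ∈ Finset.Icc 1 n, ((n:ℝ) * Real.log j - L n)^2
      = (n:ℝ) * ((n:ℝ) * Q n - L n * L n) := by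
    rw [Finset.sum_congr rfl (fun j _ => key j), Finset.sum_add_distrib,
      Finset.sum_sub_distrib, ← Finset.mul_sum, ← Finset.mul_sum, Finset.sum_const,
      Nat.card_Icc]
    have hcard : ((n + 1 - 1 : ℕ) : ℝ) = (n : ℝ) := by push_cast [Nat.add_sub_cancel]; ring
    rw [nsmul_eq_mul, hcard]
    unfold L Q
    ring
  have hsub : ({2, 3} : Finset ℕ) ⊆ Finset.Icc 1 n := by
    intro j hj
    simp only [Finset.mem_insert, Finset.mem_singleton] at hj
    rw [Finset.mem_Icc]
    rcases hj with h | h <;> omega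
  have hsum := Finset.sum_le_sum_of_subset_of_nonneg hsub
    (fun j _ _ => sq_nonneg ((n:ℝ) * Real.log j - L n))
  rw [Finset.sum_pair (by norm_num : (2:ℕ) ≠ 3)] at hsum
  have h23 : (0:ℝ) < ((n:ℝ) * Real.log (2:ℕ) - L n)^2 + ((n:ℝ) * Real.log (3:ℕ) - L n)^2 := by
    rcases lt_or_ge 0 (((n:ℝ) * Real.log (2:ℕ) - L n)^2) with h | h
    · have := sq_nonneg ((n:ℝ) * Real.log (3:ℕ) - L n); linarith
    rcases lt_or_ge 0 (((n:ℝ) * Real.log (3:ℕ) - L n)^2) with h' | h'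
    · have := sq_nonneg ((n:ℝ) * Real.log (2:ℕ) - L n); linarith
    exfalso
    have e1 : (n:ℝ) * Real.log (2:ℕ) - L n = 0 := by
      have := sq_nonneg ((n:ℝ) * Real.log (2:ℕ) - L n)
      nlinarith
    have e2 : (n:ℝ) * Real.log (3:ℕ) - L n = 0 := by
      have := sq_nonneg ((n:ℝ) * Real.log (3:ℕ) - L n)
      nlinarith
    have hlt : Real.log (2:ℕ) < Real.log (3:ℕ) := by
      push_cast
      exact Real.log_lt_log (by norm_num) (by norm_num)
    nlinarith
  have hpos : 0 < (n:ℝ) * ((n:ℝ) * Q n - L n * L n) := by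
    rw [← hS]; exact lt_of_lt_of_le h23 hsum
  nlinarith

lemma lmin_pos {n : ℕ} (hn : 3 ≤ n) : 0 < lmin n := by
  have hd := det_lemma n
  have ht := trace_lemma n
  have hdp : 0 < lmax n * lmin n := by rw [hd]; exact det_pos hn
  have hQ : 0 ≤ Q n := by unfold Q; exact Finset.sum_nonneg (fun j _ => sq_nonneg _)
  have htp : 0 < lmax n + lmin n := by rw [ht]; have := npos (show 1 ≤ n by omega); linarith
  by_contra h
  push_neg at h
  have hne : lmin n ≠ 0 := by intro h0; rw [h0, mul_zero] at hdp; exact lt_irrefl 0 hdp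
  have hlt : lmin n < 0 := lt_of_le_of_ne h hne
  have : lmax n < 0 := by nlinarith
  linarith

lemma lmax_pos {n : ℕ} (hn : 3 ≤ n) : 0 < lmax n :=
  lt_of_lt_of_le (lmin_pos hn) (min_le_max)

/-! ### Limits -/

lemma tendsto_log_nat : Tendsto (fun n : ℕ => Real.log n) atTop atTop :=
  Real.tendsto_log_atTop.comp tendsto_natCast_atTop_atTop

lemma tendsto_inv_log : Tendsto (fun n : ℕ => 1 / Real.log n) atTop (nhds 0) := by
  simpa [one_div, Pi.inv_def] using tendsto_log_nat.inv_tendsto_atTop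

lemma tendsto_logsq_div : Tendsto (fun n : ℕ => (Real.log n)^2 / (n:ℝ)) atTop (nhds 0) := by
  have h := (Real.tendsto_pow_log_div_mul_add_atTop 1 0 2 one_ne_zero).comp
    tendsto_natCast_atTop_atTop
  simpa [Function.comp_def] using h

lemma ev_facts : ∀ᶠ n : ℕ in atTop, 3 ≤ n ∧ (1:ℝ) ≤ Real.log n ∧ Real.log n ≤ (n:ℝ) := by
  filter_upwards [eventually_ge_atTop 3] with n hn
  have hn3 : (3:ℝ) ≤ (n:ℝ) := by exact_mod_cast hn
  refine ⟨hn, ?_, ?_⟩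
  · have h1 : (1:ℝ) < Real.log 3 := by
      rw [Real.lt_log_iff_exp_lt (by norm_num)]
      have := Real.exp_one_lt_d9
      linarith
    have h2 : Real.log 3 ≤ Real.log n := Real.log_le_log (by norm_num) hn3
    linarith
  · have := Real.log_le_sub_one_of_pos (show (0:ℝ) < n by linarith)
    linarith

lemma TQ : Tendsto (fun n : ℕ => Q n / ((n:ℝ) * (Real.log n)^2)) atTop (nhds 1) := by
  have hlow : Tendsto (fun n : ℕ => 1 - 2 * (1 / Real.log n)) atTop (nhds 1) := by
    have h2 := (tendsto_const_nhds : Tendsto (fun _ : ℕ => (1:ℝ)) atTop (nhds 1)).sub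
      (tendsto_inv_log.const_mul 2)
    simpa using h2
  have hhigh : Tendsto (fun n : ℕ => 1 + 3 * (1 / Real.log n)) atTop (nhds 1) := by
    have h2 := (tendsto_const_nhds : Tendsto (fun _ : ℕ => (1:ℝ)) atTop (nhds 1)).add
      (tendsto_inv_log.const_mul 3)
    simpa using h2
  apply tendsto_of_tendsto_of_tendsto_of_le_of_le' hlow hhigh
  · filter_upwards [ev_facts] with n hn
    obtain ⟨hn3, hx1, hxn⟩ := hn
    set x := Real.log n with hxdef
    have hnp := npos (show 1 ≤ n by omega)
    have hxp : 0 < x := by linarith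
    have hd : 0 < (n:ℝ) * x^2 := by positivity
    rw [le_div_iff₀ hd]
    have e : (1 - 2 * (1/x)) * ((n:ℝ) * x^2) = (n:ℝ)*x^2 - 2*(n:ℝ)*x := by
      field_simp
    rw [e]
    have := Q_lb (show 1 ≤ n by omega)
    have hn3' : (3:ℝ) ≤ (n:ℝ) := by exact_mod_cast hn3
    linarith
  · filter_upwards [ev_facts] with n hn
    obtain ⟨hn3, hx1, hxn⟩ := hn
    set x := Real.log n with hxdef
    have hnp := npos (show 1 ≤ n by omega)
    have hxp : 0 < x := by linarith
    have hd : 0 < (n:ℝ) * x^2 := by positivity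
    rw [div_le_iff₀ hd]
    have e : (1 + 3 * (1/x)) * ((n:ℝ) * x^2) = (n:ℝ)*x^2 + 3*(n:ℝ)*x := by
      field_simp
    rw [e]
    have hq := Q_ub (show 1 ≤ n by omega)
    have hn3' : (3:ℝ) ≤ (n:ℝ) := by exact_mod_cast hn3
    nlinarith [mul_nonneg (sub_nonneg.2 hx1) (sub_nonneg.2 hxn),
      mul_nonneg (sub_nonneg.2 hx1) (le_of_lt hnp)]

lemma TT : Tendsto (fun n : ℕ => ((n:ℝ) + Q n) / ((n:ℝ) * (Real.log n)^2)) atTop (nhds 1) := by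
  have hsq : Tendsto (fun n : ℕ => (1 / Real.log n)^2) atTop (nhds 0) := by
    have := tendsto_inv_log.mul tendsto_inv_log
    simpa [pow_two] using this
  have := hsq.add TQ
  rw [zero_add] at this
  apply this.congr'
  filter_upwards [ev_facts] with n hn
  obtain ⟨hn3, hx1, hxn⟩ := hn
  have hnp := npos (show 1 ≤ n by omega)
  have hxp : 0 < Real.log n := by linarith
  rw [add_div]
  congr 1
  field_simp

lemma TD : Tendsto (fun n : ℕ => ((n:ℝ) * Q n - L n * L n) / (n:ℝ)^2) atTop (nhds 1) := by
  have hlow : Tendsto (fun n : ℕ => 1 - 6 * ((Real.log n)^2 / (n:ℝ))) atTop (nhds 1) := by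
    have := (tendsto_const_nhds : Tendsto (fun _ : ℕ => (1:ℝ)) atTop (nhds 1)).sub
      (tendsto_logsq_div.const_mul 6)
    simpa using this
  have hhigh : Tendsto (fun n : ℕ => 1 + 1 * ((Real.log n)^2 / (n:ℝ))) atTop (nhds 1) := by
    have := (tendsto_const_nhds : Tendsto (fun _ : ℕ => (1:ℝ)) atTop (nhds 1)).add
      (tendsto_logsq_div.const_mul 1)
    simpa using this
  apply tendsto_of_tendsto_of_tendsto_of_le_of_le' hlow hhigh
  · filter_upwards [ev_facts] with n hn
    obtain ⟨hn3, hx1, hxn⟩ := hn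
    set x := Real.log n with hxdef
    have hnp := npos (show 1 ≤ n by omega)
    have hd : 0 < (n:ℝ)^2 := by positivity
    rw [le_div_iff₀ hd]
    have e : (1 - 6 * (x^2/(n:ℝ))) * (n:ℝ)^2 = (n:ℝ)^2 - 6*(n:ℝ)*x^2 := by
      field_simp
    rw [e]
    have hq := Q_lb (show 1 ≤ n by omega)
    have hl2 := L_ub (show 1 ≤ n by omega)
    have hl0 := L_nonneg n
    have hLsq : L n * L n ≤ ((n:ℝ)*x - (n:ℝ) + 1 + x) * ((n:ℝ)*x - (n:ℝ) + 1 + x) := by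
      have hub : L n ≤ (n:ℝ)*x - (n:ℝ) + 1 + x := hl2
      nlinarith
    nlinarith [mul_nonneg (sub_nonneg.2 hx1) (mul_nonneg (le_of_lt hnp) (sub_nonneg.2 hx1)),
      sq_nonneg (x - 1), mul_pos hnp (mul_pos hnp hnp),
      mul_nonneg (sub_nonneg.2 hxn) (sub_nonneg.2 hx1)]
  · filter_upwards [ev_facts] with n hn
    obtain ⟨hn3, hx1, hxn⟩ := hn
    set x := Real.log n with hxdef
    have hnp := npos (show 1 ≤ n by omega)
    have hd : 0 < (n:ℝ)^2 := by positivity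
    rw [div_le_iff₀ hd]
    have e : (1 + 1 * (x^2/(n:ℝ))) * (n:ℝ)^2 = (n:ℝ)^2 + (n:ℝ)*x^2 := by
      field_simp
    rw [e]
    have hq := Q_ub (show 1 ≤ n by omega)
    have hl1 := L_lb (show 1 ≤ n by omega)
    have hI1 : (0:ℝ) ≤ (n:ℝ)*x - (n:ℝ) + 1 := by nlinarith
    have hLsq : ((n:ℝ)*x - (n:ℝ) + 1) * ((n:ℝ)*x - (n:ℝ) + 1) ≤ L n * L n := by
      nlinarith
    nlinarith

/-- Theorem 1: the condition number `λmax/λmin` of the log-log least-squares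
matrix `A n` is asymptotic to `ln⁴ n`. -/
theorem cond_An_asymp :
    Filter.Tendsto (fun n : ℕ => (lmax n / lmin n) / (Real.log n)^4)
      Filter.atTop (nhds 1) := by
  have Tu : Tendsto (fun n : ℕ =>
      (((n:ℝ) + Q n) / ((n:ℝ) * (Real.log n)^2))^2
        * ((n:ℝ)^2 / ((n:ℝ) * Q n - L n * L n))) atTop (nhds 1) := by
    have h1 : Tendsto (fun n : ℕ =>
        (((n:ℝ) + Q n) / ((n:ℝ) * (Real.log n)^2))^2) atTop (nhds 1) := by
      have := TT.mul TT
      simpa [pow_two] using this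
    have h2 : Tendsto (fun n : ℕ =>
        ((n:ℝ)^2 / ((n:ℝ) * Q n - L n * L n))) atTop (nhds 1) := by
      have := TD.inv₀ one_ne_zero
      simp only [inv_one] at this
      apply this.congr
      intro n
      rw [inv_div]
    have := h1.mul h2
    simpa using this
  have he : Tendsto (fun n : ℕ => (2 + lmin n / lmax n) / (Real.log n)^4) atTop (nhds 0) := by
    have hhigh : Tendsto (fun n : ℕ => 3 * (1/Real.log n)^4) atTop (nhds 0) := by
      have h4 : Tendsto (fun n : ℕ => (1 / Real.log n)^4) atTop (nhds 0) := by
        have h := (tendsto_inv_log.mul tendsto_inv_log).mul (tendsto_inv_log.mul tendsto_inv_log)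
        rw [show ((0:ℝ)*0*(0*0)) = 0 by ring] at h
        exact h.congr (fun n => by ring)
      simpa using h4.const_mul 3
    apply tendsto_of_tendsto_of_tendsto_of_le_of_le' tendsto_const_nhds hhigh
    · filter_upwards [ev_facts] with n hn
      obtain ⟨hn3, hx1, hxn⟩ := hn
      have ha := lmax_pos hn3
      have hb := lmin_pos hn3
      have hxp : (0:ℝ) < Real.log n := by linarith
      positivity
    · filter_upwards [ev_facts] with n hn
      obtain ⟨hn3, hx1, hxn⟩ := hn
      have ha := lmax_pos hn3
      have hb := lmin_pos hn3
      have hxp : (0:ℝ) < Real.log n := by linarith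
      have hba : lmin n / lmax n ≤ 1 := by
        rw [div_le_one ha]; exact min_le_max
      have e : 3 * (1/Real.log n)^4 = 3 / (Real.log n)^4 := by
        field_simp
      rw [e]
      gcongr
      linarith
  have := Tu.sub he
  rw [sub_zero] at this
  apply this.congr'
  filter_upwards [ev_facts] with n hn
  obtain ⟨hn3, hx1, hxn⟩ := hn
  have ha := lmax_pos hn3
  have hb := lmin_pos hn3
  have hxp : (0:ℝ) < Real.log n := by linarith
  have hnp := npos (show 1 ≤ n by omega)
  have htr := trace_lemma n
  have hd := det_lemma n
  rw [← htr, ← hd]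
  set a := lmax n
  set b := lmin n
  set x := Real.log n
  field_simp
  ring
end

section
/- For an invertible real n x n matrix A, 1/(\|A\|_2 \|A^{-1}\|_2) = inf { \|A - S\|_2 / \|A\|_2 : S singular }. -/
/-!
If `S x = 0` with `x ≠ 0`, then `‖x‖ = ‖A⁻¹ ((A - S) x)‖ ≤ ‖A⁻¹‖ ‖A - S‖ ‖x‖`, so every singular `S`
satisfies `‖A - S‖ ≥ 1 / ‖A⁻¹‖`. Conversely, pick `y` in the unit ball with `‖A⁻¹ y‖ = ‖A⁻¹‖` and
put `x = A⁻¹ y`: the rank-one map `v ↦ ⟪x, v⟫ / ‖x‖² • y` has norm at most `1 / ‖x‖ = 1 / ‖A⁻¹‖` and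
agrees with `A` at `x`, so subtracting it from `A` leaves a singular matrix.
-/

/-- Operator norm of a matrix, induced by the Euclidean norm. -/
noncomputable def opN {n : ℕ} (A : Matrix (Fin n) (Fin n) ℝ) : ℝ :=
  ‖LinearMap.toContinuousLinearMap (Matrix.toEuclideanLin A)‖

namespace ContinuousLinearMap

theorem exists_norm_le_one_norm_apply_eq {𝕜 E F : Type*} [DenselyNormedField 𝕜]
    [NormedAddCommGroup E] [NormedSpace 𝕜 E] [SeminormedAddCommGroup F] [NormedSpace 𝕜 F]
    [ProperSpace E] (f : E →L[𝕜] F) :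
    ∃ x, ‖x‖ ≤ 1 ∧ ‖f x‖ = ‖f‖ := by
  obtain ⟨x, hx, hmax⟩ := (isCompact_closedBall (0 : E) 1).exists_sSup_image_eq
    ⟨0, Metric.mem_closedBall_self zero_le_one⟩ (f.continuous.norm).continuousOn
  rw [f.sSup_unitClosedBall_eq_norm] at hmax
  exact ⟨x, mem_closedBall_zero_iff.1 hx, hmax.symm⟩

end ContinuousLinearMap

namespace ContinuousLinearEquiv

variable {𝕜 E F : Type*}

theorem inv_norm_symm_le_norm_sub [NontriviallyNormedField 𝕜] [NormedAddCommGroup E]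
    [NormedSpace 𝕜 E] [NormedAddCommGroup F] [NormedSpace 𝕜 F] (T : E ≃L[𝕜] F)
    {S : E →L[𝕜] F} {x : E} (hx : x ≠ 0) (hSx : S x = 0) :
    ‖(T.symm : F →L[𝕜] E)‖⁻¹ ≤ ‖(T : E →L[𝕜] F) - S‖ := by
  have hbound : ‖x‖ ≤ ‖(T.symm : F →L[𝕜] E)‖ * ‖(T : E →L[𝕜] F) - S‖ * ‖x‖ :=
    calc ‖x‖ = ‖(T.symm : F →L[𝕜] E) (((T : E →L[𝕜] F) - S) x)‖ := by simp [hSx]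
      _ ≤ ‖(T.symm : F →L[𝕜] E)‖ * (‖(T : E →L[𝕜] F) - S‖ * ‖x‖) :=
        (T.symm : F →L[𝕜] E).le_opNorm_of_le (((T : E →L[𝕜] F) - S).le_opNorm x)
      _ = _ := (mul_assoc _ _ _).symm
  have hone : 1 ≤ ‖(T.symm : F →L[𝕜] E)‖ * ‖(T : E →L[𝕜] F) - S‖ :=
    le_of_mul_le_mul_right (by simpa using hbound) (norm_pos_iff.2 hx)
  exact (inv_le_iff_one_le_mul₀' (pos_of_mul_pos_left (one_pos.trans_le hone) (norm_nonneg _))).2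
    hone

open InnerProductSpace in
theorem exists_apply_eq_zero_norm_sub_le [RCLike 𝕜] [NormedAddCommGroup E]
    [InnerProductSpace 𝕜 E] [NormedAddCommGroup F] [NormedSpace 𝕜 F] [ProperSpace F]
    [Nontrivial F] (T : E ≃L[𝕜] F) :
    ∃ (S : E →L[𝕜] F) (x : E), x ≠ 0 ∧ S x = 0 ∧
      ‖(T : E →L[𝕜] F) - S‖ ≤ ‖(T.symm : F →L[𝕜] E)‖⁻¹ := by
  obtain ⟨y, hy, hxy⟩ := (T.symm : F →L[𝕜] E).exists_norm_le_one_norm_apply_eq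
  set x := T.symm y
  replace hxy : ‖x‖ = ‖(T.symm : F →L[𝕜] E)‖ := hxy
  have hsymm : (T.symm : F →L[𝕜] E) ≠ 0 := by
    obtain ⟨z, hz⟩ := exists_ne (0 : F)
    exact fun h => T.symm.map_ne_zero_iff.2 hz (by simpa using congr($h z))
  have hx : 0 < ‖x‖ := hxy ▸ norm_pos_iff.2 hsymm
  set D : E →L[𝕜] F := ((‖x‖ : 𝕜) ^ 2)⁻¹ • rankOne 𝕜 y x
  refine ⟨T - D, x, norm_pos_iff.1 hx, ?_, ?_⟩
  · have : ((‖x‖ : 𝕜) ^ 2) ≠ 0 := by exact_mod_cast (pow_pos hx 2).ne'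
    simp [D, x, inner_self_eq_norm_sq_to_K, smul_smul, inv_mul_cancel₀ this]
  · calc ‖(T : E →L[𝕜] F) - (T - D)‖ = (‖x‖ ^ 2)⁻¹ * (‖y‖ * ‖x‖) := by
          simp [D, norm_smul]
      _ ≤ (‖x‖ ^ 2)⁻¹ * ‖x‖ := by gcongr; simpa using mul_le_mul_of_nonneg_right hy hx.le
      _ = ‖(T.symm : F →L[𝕜] E)‖⁻¹ := by rw [← hxy]; field_simp

end ContinuousLinearEquiv

namespace Matrix

variable {𝕜 m : Type*} [RCLike 𝕜] [Fintype m] [DecidableEq m]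

noncomputable def toEuclideanCLEOfIsUnitDet {A : Matrix m m 𝕜} (hA : IsUnit A.det) :
    EuclideanSpace 𝕜 m ≃L[𝕜] EuclideanSpace 𝕜 m :=
  .equivOfInverse' (toEuclideanCLM (𝕜 := 𝕜) A) (toEuclideanCLM (𝕜 := 𝕜) A⁻¹)
    (by rw [← ContinuousLinearMap.mul_def, ← map_mul, mul_nonsing_inv A hA, map_one]; rfl)
    (by rw [← ContinuousLinearMap.mul_def, ← map_mul, nonsing_inv_mul A hA, map_one]; rfl)

theorem det_eq_zero_iff_exists_toEuclideanCLM_eq_zero {S : Matrix m m 𝕜} :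
    S.det = 0 ↔ ∃ x ≠ 0, toEuclideanCLM (𝕜 := 𝕜) S x = 0 := by
  rw [← exists_mulVec_eq_zero_iff]
  constructor
  · rintro ⟨v, hv, hSv⟩
    exact ⟨WithLp.toLp 2 v, by simpa using hv, by simp [toEuclideanCLM_toLp, hSv]⟩
  · rintro ⟨x, hx, hSx⟩
    exact ⟨x.ofLp, by simpa using hx,
      by simpa [← ofLp_toEuclideanCLM] using congrArg WithLp.ofLp hSx⟩

end Matrix

open Matrix

theorem opN_eq_norm_toEuclideanCLM {n : ℕ} (M : Matrix (Fin n) (Fin n) ℝ) :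
    opN M = ‖toEuclideanCLM (𝕜 := ℝ) M‖ :=
  rfl

theorem inv_opN_inv_le_opN_sub {n : ℕ} {A S : Matrix (Fin n) (Fin n) ℝ} (hA : IsUnit A.det)
    (hS : S.det = 0) : (opN A⁻¹)⁻¹ ≤ opN (A - S) := by
  obtain ⟨x, hx, hSx⟩ := det_eq_zero_iff_exists_toEuclideanCLM_eq_zero.1 hS
  have := (toEuclideanCLEOfIsUnitDet hA).inv_norm_symm_le_norm_sub hx hSx
  rwa [opN_eq_norm_toEuclideanCLM, opN_eq_norm_toEuclideanCLM, map_sub]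

theorem exists_det_eq_zero_opN_sub_eq {n : ℕ} [NeZero n] {A : Matrix (Fin n) (Fin n) ℝ}
    (hA : IsUnit A.det) :
    ∃ S : Matrix (Fin n) (Fin n) ℝ, S.det = 0 ∧ opN (A - S) = (opN A⁻¹)⁻¹ := by
  obtain ⟨S, x, hx, hSx, hle⟩ := (toEuclideanCLEOfIsUnitDet hA).exists_apply_eq_zero_norm_sub_le
  set S' := (toEuclideanCLM (𝕜 := ℝ)).symm S
  have hS' : S'.det = 0 := det_eq_zero_iff_exists_toEuclideanCLM_eq_zero.2 ⟨x, hx, by simpa [S']⟩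
  refine ⟨S', hS', le_antisymm ?_ (inv_opN_inv_le_opN_sub hA hS')⟩
  rwa [opN_eq_norm_toEuclideanCLM, opN_eq_norm_toEuclideanCLM, map_sub,
    StarAlgEquiv.apply_symm_apply]

/-- The reciprocal of the 2-norm condition number of an invertible matrix equals
its relative 2-norm distance to the set of singular matrices. -/
theorem inv_cond_eq_dist_to_singular {n : ℕ} (A : Matrix (Fin n) (Fin n) ℝ)
    (hA : IsUnit A.det) :
    1 / (opN A * opN A⁻¹) =
      sInf {r : ℝ | ∃ S : Matrix (Fin n) (Fin n) ℝ, S.det = 0 ∧ r = opN (A - S) / opN A} := by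
  obtain rfl | hn := eq_zero_or_neZero n
  · -- no `0 × 0` matrix is singular, so both sides are `0`
    have hset : {r : ℝ | ∃ S : Matrix (Fin 0) (Fin 0) ℝ, S.det = 0 ∧ r = opN (A - S) / opN A}
        = ∅ := Set.eq_empty_of_forall_notMem fun r ⟨S, hS, _⟩ => by simp at hS
    rw [hset, Real.sInf_empty, opN_eq_norm_toEuclideanCLM,
      Subsingleton.elim (toEuclideanCLM (𝕜 := ℝ) A) 0, norm_zero, zero_mul, div_zero]
  · obtain ⟨S, hS, hdist⟩ := exists_det_eq_zero_opN_sub_eq hA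
    have hleast : IsLeast
        {r : ℝ | ∃ S : Matrix (Fin n) (Fin n) ℝ, S.det = 0 ∧ r = opN (A - S) / opN A}
        ((opN A⁻¹)⁻¹ / opN A) := by
      refine ⟨⟨S, hS, by rw [hdist]⟩, ?_⟩
      rintro _ ⟨S', hS', rfl⟩
      exact div_le_div_of_nonneg_right (inv_opN_inv_le_opN_sub hA hS') (norm_nonneg _)
    rw [hleast.csInf_eq]
    ring
end

section
/- For every n \ge 2, the condition number \lambda_{max}(A_n)/\lambda_{min}(A_n) of the log-log least-squares matrix A_n (entries n, \sum_{j=1}^n ln j, \sum_{j=1}^n ln^2 j) tends to infinity as n \to \infty. -/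
open Finset Real Filter

/-! ### Auxiliary lemmas -/

lemma eig_sum (n : ℕ) : (hA n).eigenvalues 0 + (hA n).eigenvalues 1 = (n:ℝ) + Q n := by
  have h := (hA n).trace_eq_sum_eigenvalues
  have h2 : Matrix.trace (A n) = (n:ℝ) + Q n := by
    rw [show A n = !![(n:ℝ), L n; L n, Q n] from rfl, Matrix.trace_fin_two_of]
  rw [h2] at h
  simpa [Fin.sum_univ_two] using h.symm

lemma eig_prod (n : ℕ) : (hA n).eigenvalues 0 * (hA n).eigenvalues 1
    = (n:ℝ) * Q n - L n * L n := by
  have h := (hA n).det_eq_prod_eigenvalues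
  have hdet : (A n).det = (n:ℝ) * Q n - L n * L n := by
    simp [A, Matrix.det_fin_two_of]
  rw [hdet] at h
  simpa [Fin.prod_univ_two] using h.symm

lemma L_lower (n : ℕ) : (n:ℝ) * Real.log n - n ≤ L n := by
  induction n with
  | zero => simp [L]
  | succ n ih =>
    have hsum : L (n+1) = L n + Real.log (n+1) := by
      rw [L, L, Finset.sum_Icc_succ_top (by omega)]
      push_cast; ring
    rcases Nat.eq_zero_or_pos n with h0 | hpos
    · subst h0
      simp [hsum, L]
    · have hn : (0:ℝ) < n := by exact_mod_cast hpos
      have hlog : Real.log ((n:ℝ)+1) - Real.log n ≤ 1 / n := by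
        have hd : Real.log (((n:ℝ)+1)/n) ≤ ((n:ℝ)+1)/n - 1 :=
          Real.log_le_sub_one_of_pos (by positivity)
        rw [Real.log_div (by positivity) (by positivity)] at hd
        have : ((n:ℝ)+1)/n - 1 = 1/n := by field_simp; ring
        linarith [hd, this.symm.le]
      have hcast : ((n+1 : ℕ) : ℝ) = (n:ℝ) + 1 := by push_cast; ring
      rw [hsum, hcast]
      have : (n:ℝ) * (Real.log ((n:ℝ)+1) - Real.log n) ≤ 1 := by
        calc (n:ℝ) * (Real.log ((n:ℝ)+1) - Real.log n) ≤ (n:ℝ) * (1/n) :=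
              mul_le_mul_of_nonneg_left hlog hn.le
          _ = 1 := by field_simp
      nlinarith [ih]

lemma Q_upper (n : ℕ) : Q n ≤ (n:ℝ) * (Real.log n)^2 := by
  have h : ∀ j ∈ Finset.Icc 1 n, (Real.log j)^2 ≤ (Real.log n)^2 := by
    intro j hj
    simp only [Finset.mem_Icc] at hj
    have h1 : (0:ℝ) ≤ Real.log j := Real.log_nonneg (by exact_mod_cast hj.1)
    have h2 : Real.log j ≤ Real.log n :=
      Real.log_le_log (by exact_mod_cast (by omega : 0 < j)) (by exact_mod_cast hj.2)
    nlinarith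
  calc Q n ≤ (Finset.Icc 1 n).card • (Real.log n)^2 := Finset.sum_le_card_nsmul _ _ _ h
    _ = (n:ℝ) * (Real.log n)^2 := by
      rw [Nat.card_Icc]; simp [nsmul_eq_mul]

lemma Q_lower {n : ℕ} (hn : 4 ≤ n) : (n:ℝ) * (Real.log n)^2 / 8 ≤ Q n := by
  have hsub : Finset.Icc (n/2 + 1) n ⊆ Finset.Icc 1 n := by
    intro j hj; simp only [Finset.mem_Icc] at *; omega
  have h1 : ∑ j ∈ Finset.Icc (n/2+1) n, (Real.log j)^2 ≤ Q n := by
    apply Finset.sum_le_sum_of_subset_of_nonneg hsub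
    intro j _ _; positivity
  have hhalf : (0:ℝ) < (n:ℝ)/2 := by
    have : (0:ℝ) < n := by exact_mod_cast (by omega : 0 < n)
    linarith
  have hterm : ∀ j ∈ Finset.Icc (n/2+1) n, (Real.log ((n:ℝ)/2))^2 ≤ (Real.log j)^2 := by
    intro j hj
    simp only [Finset.mem_Icc] at hj
    have hj2 : (n:ℝ)/2 ≤ (j:ℝ) := by
      have : n ≤ 2 * j := by omega
      have := (Nat.cast_le (α := ℝ)).2 this
      push_cast at this; linarith
    have hlog1 : (0:ℝ) ≤ Real.log ((n:ℝ)/2) := by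
      apply Real.log_nonneg
      have : (4:ℝ) ≤ n := by exact_mod_cast hn
      linarith
    have hlog2 : Real.log ((n:ℝ)/2) ≤ Real.log j := Real.log_le_log hhalf hj2
    nlinarith
  have hcard : ((Finset.Icc (n/2+1) n).card : ℝ) = (n : ℝ) - (n/2 : ℕ) := by
    rw [Nat.card_Icc]
    have : n + 1 - (n/2+1) = n - n/2 := by omega
    rw [this]
    push_cast [Nat.cast_sub (by omega : n/2 ≤ n)]
    ring
  have h2 : ((Finset.Icc (n/2+1) n).card : ℝ) * (Real.log ((n:ℝ)/2))^2
      ≤ ∑ j ∈ Finset.Icc (n/2+1) n, (Real.log j)^2 := by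
    have := Finset.card_nsmul_le_sum (Finset.Icc (n/2+1) n)
      (fun j => (Real.log j)^2) ((Real.log ((n:ℝ)/2))^2) hterm
    simpa [nsmul_eq_mul] using this
  have hcard2 : (n:ℝ)/2 ≤ ((Finset.Icc (n/2+1) n).card : ℝ) := by
    rw [hcard]
    have : ((n/2 : ℕ) : ℝ) ≤ (n:ℝ)/2 := by
      have := Nat.cast_div_le (m := n) (n := 2) (α := ℝ)
      simpa using this
    linarith
  have hlogq : Real.log ((n:ℝ)) / 2 ≤ Real.log ((n:ℝ)/2) := by
    have hn4 : (4:ℝ) ≤ (n:ℝ) := by exact_mod_cast hn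
    rw [Real.log_div (by linarith) (by norm_num)]
    have h4 : Real.log 4 ≤ Real.log n := Real.log_le_log (by norm_num) hn4
    have h42 : Real.log 4 = 2 * Real.log 2 := by
      rw [show (4:ℝ) = 2^2 by norm_num, Real.log_pow]; push_cast; ring
    linarith
  have hlogn : (0:ℝ) ≤ Real.log n := Real.log_nonneg (by exact_mod_cast (by omega : 1 ≤ n))
  have hsq : (Real.log (n:ℝ))^2/4 ≤ (Real.log ((n:ℝ)/2))^2 := by nlinarith
  calc (n:ℝ) * (Real.log n)^2 / 8 = (n:ℝ)/2 * ((Real.log (n:ℝ))^2/4) := by ring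
    _ ≤ ((Finset.Icc (n/2+1) n).card : ℝ) * (Real.log ((n:ℝ)/2))^2 := by
        apply mul_le_mul hcard2 hsq (by positivity) (by positivity)
    _ ≤ ∑ j ∈ Finset.Icc (n/2+1) n, (Real.log j)^2 := h2
    _ ≤ Q n := h1

lemma det_pos_lb {n : ℕ} (hn : 2 ≤ n) : Q n ≤ (n:ℝ) * Q n - L n * L n := by
  have hins : Finset.Icc 1 n = insert 1 (Finset.Icc 2 n) := by
    ext j; simp only [Finset.mem_insert, Finset.mem_Icc]; omega
  have h1 : L n = ∑ j ∈ Finset.Icc 2 n, Real.log j := by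
    rw [L, hins, Finset.sum_insert (by simp)]
    simp
  have h2 : Q n = ∑ j ∈ Finset.Icc 2 n, (Real.log j)^2 := by
    rw [Q, hins, Finset.sum_insert (by simp)]
    simp
  have hcs : (∑ j ∈ Finset.Icc 2 n, Real.log j)^2
      ≤ ((Finset.Icc 2 n).card : ℝ) * ∑ j ∈ Finset.Icc 2 n, (Real.log j)^2 := by
    exact_mod_cast sq_sum_le_card_mul_sum_sq (s := Finset.Icc 2 n) (f := fun j => Real.log j)
  have hcard : ((Finset.Icc 2 n).card : ℝ) = (n:ℝ) - 1 := by
    rw [Nat.card_Icc]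
    have : n + 1 - 2 = n - 1 := by omega
    rw [this, Nat.cast_sub (by omega : 1 ≤ n)]
    simp
  have hQnn : 0 ≤ Q n := by
    rw [Q]; apply Finset.sum_nonneg; intro j _; positivity
  have hL2 : L n * L n ≤ ((n:ℝ) - 1) * Q n := by
    calc L n * L n = (∑ j ∈ Finset.Icc 2 n, Real.log j)^2 := by rw [h1]; ring
      _ ≤ ((Finset.Icc 2 n).card : ℝ) * ∑ j ∈ Finset.Icc 2 n, (Real.log j)^2 := hcs
      _ = ((n:ℝ) - 1) * Q n := by rw [hcard, h2]
  nlinarith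

lemma key_ineq {x q l N : ℝ} (hx1 : 1 ≤ x) (hN : 4 ≤ N) (hqU : q ≤ N * x^2)
    (hqL : N * x^2 / 8 ≤ q) (hl : N*x - N ≤ l) (hl0 : 0 ≤ l) :
    x * (N * q - l * l) ≤ 128 * (N + q)^2 := by
  have hx0 : 0 ≤ x := by linarith
  have hNx : 0 ≤ N*x - N := by nlinarith
  have hl2 : (N*x - N)^2 ≤ l^2 := by nlinarith
  have hq0 : 0 ≤ q := le_trans (by positivity) hqL
  have P1 : x*(N*x-N)^2 ≤ x*l^2 := mul_le_mul_of_nonneg_left hl2 hx0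
  have P2 : x*(N*q) ≤ x*(N*(N*x^2)) := by
    apply mul_le_mul_of_nonneg_left _ hx0
    nlinarith
  have hq2 : (N*x^2/8)^2 ≤ q^2 := by nlinarith [hqL, hq0]
  have hq3 : q^2 ≤ (N+q)^2 := by nlinarith
  have hx2 : 1 ≤ x^2 := by nlinarith
  have P3 : 2*N^2*x^2 ≤ 2*N^2*x^4 := by nlinarith [sq_nonneg (N*x), sq_nonneg N]
  have hNx0 : 0 ≤ N^2 * x := by positivity
  nlinarith [P1, P2, hq2, hq3, P3, hNx0]

lemma log_ge_one {n : ℕ} (hn : 4 ≤ n) : 1 ≤ Real.log n := by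
  have hn4 : (4:ℝ) ≤ (n:ℝ) := by exact_mod_cast hn
  have h4 : Real.log 4 ≤ Real.log n := Real.log_le_log (by norm_num) hn4
  have h42 : Real.log 4 = 2 * Real.log 2 := by
    rw [show (4:ℝ) = 2^2 by norm_num, Real.log_pow]; push_cast; ring
  have := Real.log_two_gt_d9
  linarith

/-- The condition number `λmax/λmin` of the log-log least-squares matrix `A n`
tends to infinity as `n → ∞`. -/
theorem cond_An_tendsto_atTop :
    Filter.Tendsto (fun n : ℕ => lmax n / lmin n) Filter.atTop Filter.atTop := by
  have htends : Tendsto (fun n : ℕ => Real.log n / 512) atTop atTop :=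
    (Real.tendsto_log_atTop.comp tendsto_natCast_atTop_atTop).atTop_div_const (by norm_num)
  apply tendsto_atTop_mono' atTop ?_ htends
  filter_upwards [eventually_ge_atTop 4] with n hn
  set a := (hA n).eigenvalues 0 with ha_def
  set b := (hA n).eigenvalues 1 with hb_def
  have hmax : lmax n = max a b := rfl
  have hmin : lmin n = min a b := rfl
  have hs : a + b = (n:ℝ) + Q n := eig_sum n
  have hp : a * b = (n:ℝ) * Q n - L n * L n := eig_prod n
  have hx1 : 1 ≤ Real.log n := log_ge_one hn
  have hN : (4:ℝ) ≤ (n:ℝ) := by exact_mod_cast hn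
  have hqU : Q n ≤ (n:ℝ) * (Real.log n)^2 := Q_upper n
  have hqL : (n:ℝ) * (Real.log n)^2 / 8 ≤ Q n := Q_lower hn
  have hl : (n:ℝ) * Real.log n - (n:ℝ) ≤ L n := L_lower n
  have hl0 : 0 ≤ L n := L_nonneg n
  have hq0 : 0 ≤ Q n := le_trans (by positivity) hqL
  have hppos : 0 < a * b := by
    rw [hp]
    have hd := det_pos_lb (by omega : 2 ≤ n)
    have : (0:ℝ) < (n:ℝ) * (Real.log n)^2 / 8 := by positivity
    linarith
  have hspos : 0 < a + b := by rw [hs]; linarith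
  have hapos : 0 < a := by nlinarith [hppos, hspos, sq_nonneg a]
  have hbpos : 0 < b := by nlinarith [hppos, hspos, sq_nonneg b]
  have hkey : Real.log n * (a * b) ≤ 128 * (a + b)^2 := by
    rw [hp, hs]
    exact key_ineq hx1 hN hqU hqL hl hl0
  rcases le_total a b with hab | hab
  · rw [hmax, hmin, max_eq_right hab, min_eq_left hab,
      div_le_div_iff₀ (by norm_num) hapos]
    nlinarith [hkey, hapos, hbpos, mul_pos hbpos hbpos, sq_nonneg (a - b)]
  · rw [hmax, hmin, max_eq_left hab, min_eq_right hab,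
      div_le_div_iff₀ (by norm_num) hbpos]
    nlinarith [hkey, hapos, hbpos, mul_pos hapos hapos, sq_nonneg (a - b)]
end
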